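/- Let G = (V,E) be a finite directed graph, let B ⊆ V be a split of G of size k, and let A be an alphabet of size s. The split network N_G (a multiple unicast network with k input and k output nodes) is solvable over A if and only if the graph G has private entropy k over A (E(G,s) = k), and also if and only if G has public entropy k over A (E^public(G,s) = k). -/

import Mathlib

open Finset

/-! ## Basic setup: directed graphs, guessing games, entropy (Riis, "Graph Entropy,
Network Coding and Guessing games"). -/

/-- The set `N⁻(j)` of in-neighbours of a vertex `j` in the directed graph given by
the edge relation `E` (an edge `(i,j)` is `E i j`). -/
def inNbr {V : Type*} [Fintype V] (E : V → V → Prop) [DecidableRel E] (j : V) : Finset V :=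
  Finset.univ.filter (fun i => E i j)

/-- `p` is a probability distribution on `V → A`. -/
def IsProbDist {V A : Type*} [Fintype V] [DecidableEq V] [Fintype A] (p : (V → A) → ℝ) : Prop :=
  (∀ x, 0 ≤ p x) ∧ ∑ x : V → A, p x = 1

/-- The marginal probability, under `p`, that the coordinates in `S` agree with `y`. -/
noncomputable def marginalPMF {V A : Type*} [Fintype V] [DecidableEq V] [Fintype A] [DecidableEq A]
    (p : (V → A) → ℝ) (S : Finset V) (y : ↥S → A) : ℝ :=
  ∑ x : V → A, if ∀ i : ↥S, x i.1 = y i then p x else 0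

/-- `Hent s p S` : the base-`s` Shannon entropy of the marginal of `p` on the
coordinates in `S` (using `Real.negMulLog`, so the convention `0·log(1/0) = 0` holds). -/
noncomputable def Hent {V A : Type*} [Fintype V] [DecidableEq V] [Fintype A] [DecidableEq A]
    (s : ℕ) (p : (V → A) → ℝ) (S : Finset V) : ℝ :=
  (∑ y : ↥S → A, Real.negMulLog (marginalPMF p S y)) / Real.log s

/-- `p` satisfies the information constraints of the graph: `H(j | N⁻(j)) = 0` for every
vertex `j`, where `H(X | Y) = H(X ∪ Y) − H(Y)`. -/
def InfoConstraints {V A : Type*} [Fintype V] [DecidableEq V] [Fintype A] [DecidableEq A]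
    (E : V → V → Prop) [DecidableRel E] (s : ℕ) (p : (V → A) → ℝ) : Prop :=
  ∀ j : V, Hent s p (insert j (inNbr E j)) - Hent s p (inNbr E j) = 0

/-- The (private) entropy `E(G,s)` of the graph over an alphabet of size `s`:
the sup of `H_p(V)` over probability distributions on `A^V` (`A = Fin s`)
satisfying the information constraints of the graph. -/
noncomputable def graphEntropy {V : Type*} [Fintype V] [DecidableEq V]
    (E : V → V → Prop) [DecidableRel E] (s : ℕ) : ℝ :=
  sSup {h : ℝ | ∃ p : (V → Fin s) → ℝ,
    IsProbDist p ∧ InfoConstraints E s p ∧ h = Hent s p Finset.univ}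

/-- The general entropy `E(G) = sup_{s ≥ 2} E(G,s)`. -/
noncomputable def genEntropy {V : Type*} [Fintype V] [DecidableEq V]
    (E : V → V → Prop) [DecidableRel E] : ℝ :=
  sSup {h : ℝ | ∃ s : ℕ, 2 ≤ s ∧ h = graphEntropy E s}

/-- A guessing strategy: each vertex `j` guesses a value `g j x` which may only depend on
the values `x i` for in-neighbours `i` of `j`. -/
def IsStrategy {V A : Type*} (E : V → V → Prop) (g : V → (V → A) → A) : Prop :=
  ∀ j x y, (∀ i, E i j → x i = y i) → g j x = g j y

/-- The set of assignments at which all players guess correctly. -/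
def correctSet {V A : Type*} [Fintype V] [DecidableEq V] [Fintype A] [DecidableEq A]
    (g : V → (V → A) → A) : Finset (V → A) :=
  Finset.univ.filter (fun x => ∀ j, g j x = x j)

/-- The maximal number of assignments at which all players guess correctly,
over all guessing strategies (over the alphabet `Fin s`). -/
noncomputable def maxCorrect {V : Type*} [Fintype V] [DecidableEq V]
    (E : V → V → Prop) [DecidableRel E] (s : ℕ) : ℕ :=
  sSup {m : ℕ | ∃ g : V → (V → Fin s) → Fin s, IsStrategy E g ∧ m = (correctSet g).card}

/-- The maximal probability (with `x` uniform on `A^V`) that all players guess correctly. -/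
noncomputable def maxProb {V : Type*} [Fintype V] [DecidableEq V]
    (E : V → V → Prop) [DecidableRel E] (s : ℕ) : ℝ :=
  (maxCorrect E s : ℝ) / (s : ℝ) ^ Fintype.card V

/-- The guessing number `g(G,s)`: the unique `α` with maximal success probability
`(1/s)^(n−α)`, i.e. `α = n + log_s (maximal probability)`. -/
noncomputable def guessingNumber {V : Type*} [Fintype V] [DecidableEq V]
    (E : V → V → Prop) [DecidableRel E] (s : ℕ) : ℝ :=
  (Fintype.card V : ℝ) + Real.logb s (maxProb E s)

/-- The general guessing number `g(G) = sup_{s ≥ 2} g(G,s)`. -/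
noncomputable def genGuessing {V : Type*} [Fintype V] [DecidableEq V]
    (E : V → V → Prop) [DecidableRel E] : ℝ :=
  sSup {h : ℝ | ∃ s : ℕ, 2 ≤ s ∧ h = guessingNumber E s}

/-! ## Entropy-like functions -/

/-- An S-entropy-like function: `f ∅ = 0`, monotone and submodular (the polymatroidal
axioms, equivalently Shannon's information inequalities). -/
def SEntLike {U : Type*} [DecidableEq U] (f : Finset U → ℝ) : Prop :=
  f ∅ = 0 ∧ (∀ X Y, X ⊆ Y → f X ≤ f Y) ∧ ∀ X Y, f (X ∩ Y) + f (X ∪ Y) ≤ f X + f Y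

/-- Mutual information `I_f(X;Y|Z)` of an entropy-like function. -/
def mutI {U : Type*} [DecidableEq U] (f : Finset U → ℝ) (X Y Z : Finset U) : ℝ :=
  f (X ∪ Z) + f (Y ∪ Z) - f (X ∪ Y ∪ Z) - f Z

/-- A Zhang–Yeung entropy-like function: S-entropy-like and satisfying the ZY
non-Shannon information inequality for all `A B C D`. -/
def ZYEntLike {U : Type*} [DecidableEq U] (f : Finset U → ℝ) : Prop :=
  SEntLike f ∧ ∀ A B C D : Finset U,
    2 * mutI f C D ∅ ≤ mutI f A B ∅ + mutI f A (C ∪ D) ∅ + 3 * mutI f C D A + mutI f C D B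

/-- `f` satisfies the information constraints of the graph:
`f(N⁻(j) ∪ {j}) = f(N⁻(j))` for every vertex `j`. -/
def FConstraints {V : Type*} [Fintype V] [DecidableEq V]
    (E : V → V → Prop) [DecidableRel E] (f : Finset V → ℝ) : Prop :=
  ∀ j : V, f (insert j (inNbr E j)) = f (inNbr E j)

/-- The S-entropy `E_S(G)`: the maximal value of `f(V)` over normalized S-entropy-like
functions satisfying the information constraints of `G`. -/
noncomputable def SEnt {V : Type*} [Fintype V] [DecidableEq V]
    (E : V → V → Prop) [DecidableRel E] : ℝ :=
  sSup {h : ℝ | ∃ f : Finset V → ℝ,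
    SEntLike f ∧ (∀ j : V, f {j} ≤ 1) ∧ FConstraints E f ∧ h = f Finset.univ}

/-- The ZY-entropy `E_ZY(G)`. -/
noncomputable def ZYEnt {V : Type*} [Fintype V] [DecidableEq V]
    (E : V → V → Prop) [DecidableRel E] : ℝ :=
  sSup {h : ℝ | ∃ f : Finset V → ℝ,
    ZYEntLike f ∧ (∀ j : V, f {j} ≤ 1) ∧ FConstraints E f ∧ h = f Finset.univ}

/-! ## Acyclicity -/

/-- The subgraph induced on `S` is acyclic: no directed cycle within `S`. -/
def AcyclicOn {V : Type*} (E : V → V → Prop) (S : Finset V) : Prop :=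
  ∀ v ∈ S, ¬ Relation.TransGen (fun a b => a ∈ S ∧ b ∈ S ∧ E a b) v v

/-- The acyclic independence number: the maximal size of a vertex set inducing an
acyclic subgraph. -/
noncomputable def acycIndepNum {V : Type*} [Fintype V] (E : V → V → Prop) : ℕ :=
  sSup {k : ℕ | ∃ S : Finset V, AcyclicOn E S ∧ k = S.card}

/-! ## Index codes -/

/-- An index code protocol: a broadcast map `Φ` together with decoding functions `d j`
(depending only on the in-neighbour values and the broadcast message) recovering `x j`. -/
def IsIndexCode {V A W : Type*} (E : V → V → Prop)
    (Φ : (V → A) → W) (d : V → (V → A) → W → A) : Prop :=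
  (∀ (j : V) (x y : V → A) (w : W), (∀ i, E i j → x i = y i) → d j x w = d j y w) ∧
  ∀ (x : V → A) (j : V), d j x (Φ x) = x j

/-- The length `log_s |Φ(A^V)|` of an index code protocol. -/
noncomputable def protocolLength {V A W : Type*} [Fintype V] [DecidableEq V] [Fintype A]
    [Fintype W] [DecidableEq W] (s : ℕ) (Φ : (V → A) → W) : ℝ :=
  Real.logb s ((Finset.univ.image Φ).card)

/-- The base-`s` entropy of the broadcast message `Φ(x)` for `x` uniform on `A^V`. -/
noncomputable def protocolEntropy {V A W : Type*} [Fintype V] [DecidableEq V] [Fintype A]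
    [DecidableEq A] [Fintype W] [DecidableEq W] (s : ℕ) (Φ : (V → A) → W) : ℝ :=
  (∑ w : W, Real.negMulLog
    (((Finset.univ.filter (fun x : V → A => Φ x = w)).card : ℝ) / (s : ℝ) ^ Fintype.card V))
    / Real.log s

/-- `i(G,s)`: the minimal length of an index code for `G` over `Fin s`. -/
noncomputable def indexCodeLen {V : Type*} [Fintype V] [DecidableEq V]
    (E : V → V → Prop) [DecidableRel E] (s : ℕ) : ℝ :=
  sInf {h : ℝ | ∃ (W : Type) (iW : Fintype W) (dW : DecidableEq W)
    (Φ : (V → Fin s) → W) (d : V → (V → Fin s) → W → Fin s),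
    IsIndexCode E Φ d ∧ h = @protocolLength V (Fin s) W _ _ _ iW dW s Φ}

/-- `i_entro(G,s)`: the minimal entropy of an index code for `G` over `Fin s`. -/
noncomputable def indexCodeEntro {V : Type*} [Fintype V] [DecidableEq V]
    (E : V → V → Prop) [DecidableRel E] (s : ℕ) : ℝ :=
  sInf {h : ℝ | ∃ (W : Type) (iW : Fintype W) (dW : DecidableEq W)
    (Φ : (V → Fin s) → W) (d : V → (V → Fin s) → W → Fin s),
    IsIndexCode E Φ d ∧ h = @protocolEntropy V (Fin s) W _ _ _ _ iW dW s Φ}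

/-- The information constraints on `V ∪ {w}` (`w = none`) used to define the S/ZY-minimal
index code: `f(N⁻(j) ∪ {w} ∪ {j}) = f(N⁻(j) ∪ {w})` for each `j`, `f(V ∪ {w}) = f(V)`
and `f(V) = n`. -/
def WConstraints {V : Type*} [Fintype V] [DecidableEq V]
    (E : V → V → Prop) [DecidableRel E] (f : Finset (Option V) → ℝ) : Prop :=
  (∀ j : V, f (insert (some j) (insert none ((inNbr E j).image some)))
      = f (insert none ((inNbr E j).image some))) ∧
  f (insert none ((Finset.univ : Finset V).image some))
      = f ((Finset.univ : Finset V).image some) ∧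
  f ((Finset.univ : Finset V).image some) = (Fintype.card V : ℝ)

/-- The S-minimal index code `i_S(G)`. -/
noncomputable def iS {V : Type*} [Fintype V] [DecidableEq V]
    (E : V → V → Prop) [DecidableRel E] : ℝ :=
  sInf {h : ℝ | ∃ f : Finset (Option V) → ℝ,
    SEntLike f ∧ (∀ j : V, f {some j} ≤ 1) ∧ WConstraints E f ∧ h = f {none}}

/-- The ZY-minimal index code `i_ZY(G)`. -/
noncomputable def iZY {V : Type*} [Fintype V] [DecidableEq V]
    (E : V → V → Prop) [DecidableRel E] : ℝ :=
  sInf {h : ℝ | ∃ f : Finset (Option V) → ℝ,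
    ZYEntLike f ∧ (∀ j : V, f {some j} ≤ 1) ∧ WConstraints E f ∧ h = f {none}}

/-! ## The bidirected pentagon `C5` -/

/-- The pentagon with bidirected edges: vertices `Fin 5`, edges between cyclically
adjacent vertices. -/
def E5 : Fin 5 → Fin 5 → Prop := fun i j => (i.1 + 1) % 5 = j.1 ∨ (j.1 + 1) % 5 = i.1

instance : DecidableRel E5 := fun i j => by unfold E5; infer_instance

/-!
For a guessing strategy `g`, the syndrome map sending `x` to `x` on `B` and to the guessing
errors `x j - g j x` off `B` is injective, by well-founded induction along the acyclic graph
on `V \ B`; hence it is a bijection of `A^V`. So exactly `s^k` assignments are guessed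
correctly off `B`, and `g` has at most `s^k` fixed points, with equality iff `g` solves the
split network.

Both entropies are governed by the maximal number of fixed points. A distribution satisfying
the information constraints makes every `x j` a function of its in-neighbours on its support,
so it is supported on the fixed points of a single strategy; conversely the uniform
distribution on the fixed points of a strategy satisfies the constraints. Hence
`E(G,s) = log_s (max fixed points)`. For an index code, each fibre of the message map consists
of fixed points of the strategy `d · · w`, which bounds the message entropy below by
`n - log_s (max fixed points)`; and a solution yields the code broadcasting `x` minus the
assignment the network computes from `x|_B`, a message vanishing on `B` and hence taking at
most `s^(n-k)` values.
-/

open Function Real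

section Acyclic

variable {V : Type*} {E : V → V → Prop} {S : Finset V}

theorem AcyclicOn.wellFounded [Finite V] (hS : AcyclicOn E S) :
    WellFounded (Relation.TransGen fun a b => a ∈ S ∧ b ∈ S ∧ E a b) := by
  have : IsTrans V (Relation.TransGen fun a b => a ∈ S ∧ b ∈ S ∧ E a b) :=
    ⟨fun _ _ _ => Relation.TransGen.trans⟩
  have : Std.Irrefl (Relation.TransGen fun a b => a ∈ S ∧ b ∈ S ∧ E a b) := ⟨fun v hv => by
    obtain ⟨_, _, hlast⟩ := Relation.TransGen.tail'_iff.1 hv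
    exact hS v hlast.2.1 hv⟩
  exact Finite.wellFounded_of_trans_of_irrefl _

end Acyclic

section SplitCounting

variable {V A : Type*} [Fintype V] [DecidableEq V] {E : V → V → Prop} (B : Finset V)
  (g : V → (V → A) → A)

def SolvesSplitNetwork : Prop :=
  ∀ x : V → A, (∀ j, j ∉ B → x j = g j x) → ∀ b ∈ B, x b = g b x

def correctOutside [Fintype A] [DecidableEq A] : Finset (V → A) :=
  univ.filter fun x => ∀ j, j ∉ B → x j = g j x

def syndrome [Sub A] (x : V → A) : V → A :=
  fun j => if j ∈ B then x j else x j - g j x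

variable {B g}

theorem correctSet_subset_correctOutside [Fintype A] [DecidableEq A] :
    correctSet g ⊆ correctOutside B g := fun x hx =>
  mem_filter.2 ⟨mem_univ x, fun j _ => ((mem_filter.1 hx).2 j).symm⟩

variable [AddGroup A]

theorem syndrome_injective (hB : AcyclicOn E (univ \ B)) (hg : IsStrategy E g) :
    Injective (syndrome B g) := by
  intro x y hxy
  funext v
  induction v using hB.wellFounded.induction with | _ v ih => ?_
  have hv := congrFun hxy v
  by_cases hvB : v ∈ B
  · simpa [syndrome, hvB] using hv
  · have hgv : g v x = g v y := hg v x y fun i hi => by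
      by_cases hiB : i ∈ B
      · simpa [syndrome, hiB] using congrFun hxy i
      · exact ih i (.single ⟨by simpa using hiB, by simpa using hvB, hi⟩)
    simpa [syndrome, hvB, hgv] using hv

theorem syndrome_bijective [Finite A] (hB : AcyclicOn E (univ \ B)) (hg : IsStrategy E g) :
    Bijective (syndrome B g) :=
  Finite.injective_iff_bijective.1 (syndrome_injective hB hg)

variable [Fintype A] [DecidableEq A]

theorem mem_correctOutside_iff_syndrome {x : V → A} :
    x ∈ correctOutside B g ↔ ∀ j, j ∉ B → syndrome B g x j = 0 := by
  simp only [correctOutside, mem_filter, mem_univ, true_and]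
  exact forall₂_congr fun j hj => by rw [syndrome, if_neg hj, sub_eq_zero]

theorem card_correctOutside (hB : AcyclicOn E (univ \ B)) (hg : IsStrategy E g) :
    (correctOutside B g).card = Fintype.card A ^ B.card := by
  rw [← Fintype.card_coe B, ← Fintype.card_fun, ← card_univ]
  refine card_bij (fun x _ => B.restrict x) (fun _ _ => mem_univ _) (fun x hx y hy hxy => ?_)
    fun c _ => ?_
  · refine syndrome_injective hB hg (funext fun j => ?_)
    by_cases hj : j ∈ B
    · simpa [syndrome, hj] using congrFun hxy ⟨j, hj⟩
    · rw [mem_correctOutside_iff_syndrome.1 hx j hj, mem_correctOutside_iff_syndrome.1 hy j hj]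
  · obtain ⟨x, hx⟩ := (syndrome_bijective hB hg).2 fun j => if h : j ∈ B then c ⟨j, h⟩ else 0
    refine ⟨x, mem_correctOutside_iff_syndrome.2 fun j hj => by simp [hx, hj], funext fun b => ?_⟩
    simpa [syndrome] using congrFun hx b

theorem card_correctSet_le (hB : AcyclicOn E (univ \ B)) (hg : IsStrategy E g) :
    (correctSet g).card ≤ Fintype.card A ^ B.card :=
  card_correctOutside hB hg ▸ card_le_card correctSet_subset_correctOutside

theorem card_correctSet_eq_iff (hB : AcyclicOn E (univ \ B)) (hg : IsStrategy E g) :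
    (correctSet g).card = Fintype.card A ^ B.card ↔ SolvesSplitNetwork B g := by
  rw [← card_correctOutside hB hg]
  constructor
  · intro h x hx b _
    have hxg : x ∈ correctSet g :=
      (eq_of_subset_of_card_le correctSet_subset_correctOutside h.ge).symm ▸
        mem_filter.2 ⟨mem_univ x, hx⟩
    exact ((mem_filter.1 hxg).2 b).symm
  · intro h
    refine congrArg card (subset_antisymm correctSet_subset_correctOutside fun x hx => ?_)
    have hx := (mem_filter.1 hx).2
    refine mem_filter.2 ⟨mem_univ x, fun j => ?_⟩
    by_cases hj : j ∈ B
    exacts [(h x hx j hj).symm, (hx j hj).symm]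

end SplitCounting

section MaxCorrect

variable {V : Type*} [Fintype V] [DecidableEq V] {E : V → V → Prop} {s : ℕ}

theorem bddAbove_card_correctSet :
    BddAbove {m | ∃ g : V → (V → Fin s) → Fin s, IsStrategy E g ∧ m = (correctSet g).card} :=
  ⟨Fintype.card (V → Fin s), by rintro _ ⟨g, -, rfl⟩; exact card_le_univ _⟩

variable [DecidableRel E]

theorem card_correctSet_le_maxCorrect {g : V → (V → Fin s) → Fin s} (hg : IsStrategy E g) :
    (correctSet g).card ≤ maxCorrect E s :=
  le_csSup bddAbove_card_correctSet ⟨g, hg, rfl⟩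

variable [NeZero s]

theorem exists_card_correctSet_eq_maxCorrect :
    ∃ g : V → (V → Fin s) → Fin s, IsStrategy E g ∧ (correctSet g).card = maxCorrect E s := by
  obtain ⟨g, hg, h⟩ :=
    Nat.sSup_mem (by exact ⟨_, fun _ _ => 0, fun _ _ _ _ => rfl, rfl⟩)
      (bddAbove_card_correctSet (E := E) (s := s))
  exact ⟨g, hg, h.symm⟩

theorem maxCorrect_pos : 0 < maxCorrect E s :=
  card_pos.2 ⟨0, mem_filter.2 ⟨mem_univ _, fun _ => rfl⟩⟩ |>.trans_le
    (card_correctSet_le_maxCorrect (E := E) (g := fun _ _ => 0) fun _ _ _ _ => rfl)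

variable {B : Finset V}

theorem maxCorrect_le_pow (hB : AcyclicOn E (univ \ B)) : maxCorrect E s ≤ s ^ B.card := by
  obtain ⟨g, hg, h⟩ := exists_card_correctSet_eq_maxCorrect (E := E) (s := s)
  simpa [h] using card_correctSet_le hB hg

theorem maxCorrect_eq_pow_iff (hB : AcyclicOn E (univ \ B)) :
    maxCorrect E s = s ^ B.card ↔
      ∃ g : V → (V → Fin s) → Fin s, IsStrategy E g ∧ SolvesSplitNetwork B g := by
  constructor
  · intro h
    obtain ⟨g, hg, hmax⟩ := exists_card_correctSet_eq_maxCorrect (E := E) (s := s)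
    exact ⟨g, hg, (card_correctSet_eq_iff hB hg).1 (by simp [hmax, h])⟩
  · rintro ⟨g, hg, hsol⟩
    refine (maxCorrect_le_pow hB).antisymm ?_
    simpa [(card_correctSet_eq_iff hB hg).2 hsol] using card_correctSet_le_maxCorrect hg

end MaxCorrect

section NegMulLog

theorem mul_neg_log_le_negMulLog {r R : ℝ} (hr : 0 ≤ r) (h : r ≤ R) :
    r * -log R ≤ negMulLog r := by
  rcases hr.eq_or_lt with rfl | hr
  · simp
  · rw [negMulLog, neg_mul, mul_neg]
    exact neg_le_neg (mul_le_mul_of_nonneg_left (log_le_log hr h) hr.le)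

theorem mul_neg_log_eq_negMulLog_iff {r R : ℝ} (hr : 0 < r) (hR : 0 < R) :
    r * -log R = negMulLog r ↔ R = r := by
  rw [negMulLog, neg_mul, mul_neg, neg_inj, mul_right_inj' hr.ne']
  exact log_injOn_pos.eq_iff hR hr

theorem neg_log_le_sum_negMulLog {ι : Type*} {t : Finset ι} {q : ι → ℝ} {c : ℝ}
    (h0 : ∀ i ∈ t, 0 ≤ q i) (h1 : ∑ i ∈ t, q i = 1) (hc : ∀ i ∈ t, q i ≤ c) :
    -log c ≤ ∑ i ∈ t, negMulLog (q i) :=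
  calc -log c = ∑ i ∈ t, q i * -log c := by rw [← sum_mul, h1, one_mul]
    _ ≤ ∑ i ∈ t, negMulLog (q i) :=
        sum_le_sum fun i hi => mul_neg_log_le_negMulLog (h0 i hi) (hc i hi)

theorem sum_negMulLog_le_log_card {ι : Type*} {t : Finset ι} {q : ι → ℝ}
    (h0 : ∀ i ∈ t, 0 ≤ q i) (h1 : ∑ i ∈ t, q i = 1) :
    ∑ i ∈ t, negMulLog (q i) ≤ log t.card := by
  have hc : (0 : ℝ) < t.card := by
    exact_mod_cast card_pos.2 (nonempty_of_sum_ne_zero (h1 ▸ one_ne_zero))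
  have hterm : ∀ i ∈ t, negMulLog (q i) ≤ q i * log t.card + (t.card : ℝ)⁻¹ - q i := by
    intro i hi
    have h := negMulLog_le_one_sub_self (mul_nonneg (h0 i hi) hc.le)
    rw [negMulLog_mul] at h
    rw [← mul_le_mul_iff_right₀ hc]
    field_simp
    simp only [negMulLog] at h ⊢
    linarith
  calc ∑ i ∈ t, negMulLog (q i) ≤ ∑ i ∈ t, (q i * log t.card + (t.card : ℝ)⁻¹ - q i) :=
        sum_le_sum hterm
    _ = log t.card := by
        rw [sum_sub_distrib, sum_add_distrib, ← sum_mul, h1, sum_const, nsmul_eq_mul,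
          mul_inv_cancel₀ hc.ne']
        ring

end NegMulLog

section Pushforward

variable {α β γ : Type*} [Fintype α] [DecidableEq β] [DecidableEq γ] {f : α → β} {q : α → ℝ}

def pushforward (f : α → β) (q : α → ℝ) (b : β) : ℝ :=
  ∑ a, if f a = b then q a else 0

theorem pushforward_nonneg (hq : ∀ a, 0 ≤ q a) (b : β) : 0 ≤ pushforward f q b :=
  sum_nonneg fun a _ => by split_ifs <;> simp [hq]

theorem pushforward_ne_zero_iff (hq : ∀ a, 0 ≤ q a) {b : β} :
    pushforward f q b ≠ 0 ↔ ∃ a, q a ≠ 0 ∧ f a = b := by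
  rw [pushforward, Ne, sum_eq_zero_iff_of_nonneg fun a _ => by split_ifs <;> simp [hq]]
  simp [and_comm]

theorem le_pushforward_apply (hq : ∀ a, 0 ≤ q a) (a : α) : q a ≤ pushforward f q (f a) := by
  simpa [pushforward] using single_le_sum (f := fun a' => if f a' = f a then q a' else 0)
    (fun a' _ => by split_ifs <;> simp [hq]) (mem_univ a)

theorem pushforward_apply_eq_iff (hq : ∀ a, 0 ≤ q a) (a : α) :
    pushforward f q (f a) = q a ↔ ∀ a', a' ≠ a → f a' = f a → q a' = 0 := by
  classical
  rw [pushforward, ← add_sum_erase _ _ (mem_univ a), if_pos rfl, add_eq_left,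
    sum_eq_zero_iff_of_nonneg fun a' _ => by split_ifs <;> simp [hq]]
  simp

variable [Fintype β]

theorem sum_pushforward_mul (f : α → β) (q : α → ℝ) (φ : β → ℝ) :
    ∑ b, pushforward f q b * φ b = ∑ a, q a * φ (f a) := by
  simp only [pushforward, sum_mul, ite_mul, zero_mul]
  rw [sum_comm]
  simp

theorem pushforward_comp (g : β → γ) (f : α → β) (q : α → ℝ) :
    pushforward (g ∘ f) q = pushforward g (pushforward f q) := by
  funext c
  have h := sum_pushforward_mul f q fun b => if g b = c then 1 else 0
  simp only [mul_ite, mul_one, mul_zero] at h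
  exact h.symm

theorem sum_negMulLog_pushforward_eq_iff (hq : ∀ a, 0 ≤ q a) :
    ∑ b, negMulLog (pushforward f q b) = ∑ a, negMulLog (q a) ↔ Set.InjOn f {a | q a ≠ 0} := by
  have hsum : ∑ b, negMulLog (pushforward f q b) = ∑ a, q a * -log (pushforward f q (f a)) := by
    simpa [negMulLog] using sum_pushforward_mul f q fun b => -log (pushforward f q b)
  have hterm : ∀ a, q a * -log (pushforward f q (f a)) = negMulLog (q a) ↔
      (q a ≠ 0 → ∀ a', a' ≠ a → f a' = f a → q a' = 0) := fun a => by
    rcases (hq a).eq_or_lt with h | h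
    · simp [← h]
    · rw [mul_neg_log_eq_negMulLog_iff h (h.trans_le (le_pushforward_apply hq a)),
        pushforward_apply_eq_iff hq]
      simp [h.ne']
  rw [hsum, sum_eq_sum_iff_of_le fun a _ =>
    mul_neg_log_le_negMulLog (hq a) (le_pushforward_apply hq a)]
  simp only [mem_univ, true_implies, hterm]
  constructor
  · intro h a ha a' ha' hf
    by_contra hne
    exact ha' (h a ha a' (Ne.symm hne) hf.symm)
  · intro h a ha a' hne hf
    by_contra ha'
    exact hne (h ha' ha hf)

end Pushforward

section Marginal

variable {V A : Type*} [Fintype V] [DecidableEq V] [Fintype A] {p : (V → A) → ℝ}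

theorem IsProbDist.exists_ne_zero (hp : IsProbDist p) : ∃ x, p x ≠ 0 := by
  obtain ⟨x, -, hx⟩ := exists_ne_zero_of_sum_ne_zero (hp.2 ▸ one_ne_zero)
  exact ⟨x, hx⟩

variable [DecidableEq A] {s : ℕ}

theorem marginalPMF_eq_pushforward (p : (V → A) → ℝ) (S : Finset V) :
    marginalPMF p S = pushforward S.restrict p := by
  funext y
  simp [marginalPMF, pushforward, funext_iff]

theorem Hent_eq_Hent_iff (hs : 1 < s) (hp : ∀ x, 0 ≤ p x) {S T : Finset V} (hST : S ⊆ T) :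
    Hent s p S = Hent s p T ↔ ∀ x x', p x ≠ 0 → p x' ≠ 0 →
      S.restrict x = S.restrict x' → T.restrict x = T.restrict x' := by
  have hlog : 0 < log s := log_pos (by exact_mod_cast hs)
  have hS : marginalPMF p S =
      pushforward (@restrict₂ _ (fun _ => A) _ _ hST) (pushforward T.restrict p) := by
    rw [marginalPMF_eq_pushforward, ← pushforward_comp, restrict₂_comp_restrict]
  rw [Hent, Hent, div_left_inj' hlog.ne', hS, marginalPMF_eq_pushforward,
    sum_negMulLog_pushforward_eq_iff (pushforward_nonneg hp)]
  simp only [Set.InjOn, Set.mem_ofPred_eq, pushforward_ne_zero_iff hp]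
  constructor
  · intro h x x' hx hx' hxx'
    exact h ⟨x, hx, rfl⟩ ⟨x', hx', rfl⟩ hxx'
  · rintro h _ ⟨x, hx, rfl⟩ _ ⟨x', hx', rfl⟩ hxx'
    exact h x x' hx hx' hxx'

theorem Hent_univ (hp : ∀ x, 0 ≤ p x) : Hent s p univ = (∑ x, negMulLog (p x)) / log s := by
  rw [Hent, marginalPMF_eq_pushforward, (sum_negMulLog_pushforward_eq_iff hp).2]
  exact fun x _ y _ h => funext fun v => congrFun h ⟨v, mem_univ v⟩

theorem infoConstraints_iff {E : V → V → Prop} [DecidableRel E] (hs : 1 < s) (hp : ∀ x, 0 ≤ p x) :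
    InfoConstraints E s p ↔ ∀ j x x', p x ≠ 0 → p x' ≠ 0 →
      (∀ i, E i j → x i = x' i) → x j = x' j := by
  refine forall_congr' fun j => ?_
  rw [sub_eq_zero, eq_comm, Hent_eq_Hent_iff hs hp (subset_insert _ _)]
  simp only [funext_iff, restrict, Subtype.forall, forall_mem_insert, inNbr, mem_filter,
    mem_univ, true_and]
  exact forall₄_congr fun x x' _ _ => ⟨fun h hN => (h hN).1, fun h hN => ⟨h hN, hN⟩⟩

theorem Hent_univ_le_logb_card (hp : IsProbDist p) {F : Finset (V → A)}
    (hF : ∀ x, p x ≠ 0 → x ∈ F) : Hent s p univ ≤ logb s F.card := by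
  have hout : ∀ x ∉ F, p x = 0 := fun x hx => not_ne_iff.1 (mt (hF x) hx)
  have hsum : ∑ x ∈ F, p x = 1 := by
    rw [← hp.2, sum_subset (subset_univ F) fun x _ hx => hout x hx]
  rw [Hent_univ hp.1, logb, ← sum_subset (subset_univ F) fun x _ hx => by simp [hout x hx]]
  exact div_le_div_of_nonneg_right (sum_negMulLog_le_log_card (fun x _ => hp.1 x) hsum)
    (log_natCast_nonneg s)

end Marginal

section Uniform

noncomputable def uniformDist {α : Type*} [DecidableEq α] (F : Finset α) (x : α) : ℝ :=
  if x ∈ F then (F.card : ℝ)⁻¹ else 0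

theorem uniformDist_nonneg {α : Type*} [DecidableEq α] (F : Finset α) (x : α) :
    0 ≤ uniformDist F x := by
  unfold uniformDist
  positivity

theorem uniformDist_ne_zero_iff {α : Type*} [DecidableEq α] {F : Finset α} {x : α} :
    uniformDist F x ≠ 0 ↔ x ∈ F := by
  unfold uniformDist
  split_ifs with hx
  · simpa [hx] using (card_pos.2 ⟨x, hx⟩).ne'
  · simpa

variable {V A : Type*} [Fintype V] [DecidableEq V] [Fintype A] [DecidableEq A] {s : ℕ}
  {F : Finset (V → A)}

theorem isProbDist_uniformDist (hF : F.Nonempty) : IsProbDist (uniformDist F) := by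
  refine ⟨uniformDist_nonneg F, ?_⟩
  simp only [uniformDist]
  rw [sum_ite_mem, univ_inter, sum_const, nsmul_eq_mul,
    mul_inv_cancel₀ (by exact_mod_cast hF.card_pos.ne')]

theorem Hent_univ_uniformDist (hF : F.Nonempty) :
    Hent s (uniformDist F) univ = logb s F.card := by
  simp only [Hent_univ (uniformDist_nonneg F), uniformDist, apply_ite negMulLog, negMulLog_zero]
  rw [sum_ite_mem, univ_inter, sum_const, nsmul_eq_mul, negMulLog, log_inv, logb]
  field_simp

theorem infoConstraints_uniformDist_correctSet {E : V → V → Prop} [DecidableRel E] (hs : 1 < s)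
    {g : V → (V → A) → A} (hg : IsStrategy E g) :
    InfoConstraints E s (uniformDist (correctSet g)) := by
  refine (infoConstraints_iff hs (uniformDist_nonneg _)).2 fun j x x' hx hx' hxx' => ?_
  rw [uniformDist_ne_zero_iff, correctSet, mem_filter] at hx hx'
  rw [← hx.2 j, ← hx'.2 j]
  exact hg j x x' hxx'

end Uniform

section SupportStrategy

variable {V A : Type*} {E : V → V → Prop}

-- `⟨x⟩` supplies the `Nonempty` instance; away from the support of `p` the guess is arbitrary.
noncomputable def supportStrategy (E : V → V → Prop) (p : (V → A) → ℝ) (j : V) (x : V → A) :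
    A :=
  (@Classical.epsilon (V → A) ⟨x⟩ fun x' => p x' ≠ 0 ∧ ∀ i, E i j → x' i = x i) j

theorem isStrategy_supportStrategy (p : (V → A) → ℝ) : IsStrategy E (supportStrategy E p) := by
  intro j x y hxy
  have h : (fun x' => p x' ≠ 0 ∧ ∀ i, E i j → x' i = x i) =
      fun x' => p x' ≠ 0 ∧ ∀ i, E i j → x' i = y i :=
    funext fun x' => propext <| and_congr_right' <| forall₂_congr fun i hi => by rw [hxy i hi]
  simp only [supportStrategy, h]

theorem mem_correctSet_supportStrategy [Fintype V] [DecidableEq V] [Fintype A] [DecidableEq A]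
    {p : (V → A) → ℝ}
    (hdet : ∀ j x x', p x ≠ 0 → p x' ≠ 0 → (∀ i, E i j → x i = x' i) → x j = x' j)
    {x : V → A} (hx : p x ≠ 0) : x ∈ correctSet (supportStrategy E p) := by
  refine mem_filter.2 ⟨mem_univ x, fun j => ?_⟩
  obtain ⟨hx', hagree⟩ := @Classical.epsilon_spec (V → A)
    (fun x' => p x' ≠ 0 ∧ ∀ i, E i j → x' i = x i) ⟨x, hx, fun _ _ => rfl⟩
  exact hdet j _ x hx' hx hagree

end SupportStrategy

theorem graphEntropy_eq_logb_maxCorrect {V : Type*} [Fintype V] [DecidableEq V]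
    {E : V → V → Prop} [DecidableRel E] {s : ℕ} (hs : 1 < s) :
    graphEntropy E s = logb s (maxCorrect E s) := by
  have : NeZero s := ⟨by omega⟩
  refine IsGreatest.csSup_eq ⟨?_, ?_⟩
  · obtain ⟨g, hg, hcard⟩ := exists_card_correctSet_eq_maxCorrect (E := E) (s := s)
    have hne : (correctSet g).Nonempty := card_pos.1 (hcard ▸ maxCorrect_pos)
    exact ⟨_, isProbDist_uniformDist hne, infoConstraints_uniformDist_correctSet hs hg,
      by rw [Hent_univ_uniformDist hne, hcard]⟩
  · rintro _ ⟨p, hp, hc, rfl⟩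
    have hsupp : ∀ x, p x ≠ 0 → x ∈ correctSet (supportStrategy E p) := fun _ =>
      mem_correctSet_supportStrategy ((infoConstraints_iff hs hp.1).1 hc)
    obtain ⟨x, hx⟩ := hp.exists_ne_zero
    calc Hent s p univ ≤ logb s (correctSet (supportStrategy E p)).card :=
          Hent_univ_le_logb_card hp hsupp
      _ ≤ logb s (maxCorrect E s) :=
          logb_le_logb_of_le (by exact_mod_cast hs) (by exact_mod_cast card_pos.2 ⟨x, hsupp x hx⟩)
            (by exact_mod_cast card_correctSet_le_maxCorrect (isStrategy_supportStrategy p))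

section ProtocolEntropy

variable {V W : Type*} [Fintype V] [DecidableEq V] [Fintype W] [DecidableEq W] {s : ℕ}

theorem sum_card_filter_div_pow (hs : 0 < s) (Φ : (V → Fin s) → W) :
    ∑ w, ((univ.filter fun x => Φ x = w).card : ℝ) / (s : ℝ) ^ Fintype.card V = 1 := by
  rw [← sum_div, div_eq_one_iff_eq (by positivity)]
  exact_mod_cast (card_eq_sum_card_fiberwise fun x _ => mem_univ (Φ x)).symm.trans (by simp)

theorem card_sub_logb_le_protocolEntropy (hs : 1 < s) {Φ : (V → Fin s) → W} {M : ℕ}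
    (hM : 0 < M) (hfib : ∀ w, (univ.filter fun x => Φ x = w).card ≤ M) :
    Fintype.card V - logb s M ≤ protocolEntropy s Φ := by
  have hlog : 0 < log s := log_pos (by exact_mod_cast hs)
  have hpow : (0 : ℝ) < (s : ℝ) ^ Fintype.card V := by positivity
  have h := neg_log_le_sum_negMulLog (t := univ) (c := M / (s : ℝ) ^ Fintype.card V)
    (fun w _ => by positivity) (sum_card_filter_div_pow (by omega) Φ)
    fun w _ => div_le_div_of_nonneg_right (by exact_mod_cast hfib w) hpow.le
  rw [log_div (by positivity) hpow.ne', log_pow] at h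
  rw [protocolEntropy, le_div_iff₀ hlog, logb, sub_mul, div_mul_cancel₀ _ hlog.ne']
  linarith

theorem protocolEntropy_le_protocolLength (hs : 0 < s) (Φ : (V → Fin s) → W) :
    protocolEntropy s Φ ≤ protocolLength s Φ := by
  have hout : ∀ w ∉ univ.image Φ, (univ.filter fun x => Φ x = w).card = 0 := fun w hw =>
    card_eq_zero.2 (filter_eq_empty_iff.2 fun x _ hx => hw (hx ▸ mem_image_of_mem Φ (mem_univ x)))
  have hsum := sum_card_filter_div_pow hs Φ
  rw [← sum_subset (subset_univ _) fun w _ hw => by simp [hout w hw]] at hsum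
  rw [protocolEntropy, protocolLength, logb,
    ← sum_subset (subset_univ (univ.image Φ)) fun w _ hw => by simp [hout w hw]]
  exact div_le_div_of_nonneg_right (sum_negMulLog_le_log_card (fun _ _ => by positivity) hsum)
    (log_natCast_nonneg s)

end ProtocolEntropy

section IndexCode

variable {V A W : Type*} {E : V → V → Prop} {Φ : (V → A) → W} {d : V → (V → A) → W → A}

theorem IsIndexCode.isStrategy (hcode : IsIndexCode E Φ d) (w : W) :
    IsStrategy E fun j x => d j x w :=
  fun j x y hxy => hcode.1 j x y w hxy

theorem IsIndexCode.filter_subset_correctSet [Fintype V] [DecidableEq V] [Fintype A]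
    [DecidableEq A] [DecidableEq W] (hcode : IsIndexCode E Φ d) (w : W) :
    univ.filter (fun x => Φ x = w) ⊆ correctSet fun j x => d j x w := fun x hx =>
  mem_filter.2 ⟨mem_univ x, fun j => (mem_filter.1 hx).2 ▸ hcode.2 x j⟩

end IndexCode

section IndexCodeEntropy

variable {V : Type} [Fintype V] [DecidableEq V] {E : V → V → Prop} [DecidableRel E] {s : ℕ}

theorem IsIndexCode.card_sub_logb_maxCorrect_le_protocolEntropy {W : Type*} [Fintype W]
    [DecidableEq W] {Φ : (V → Fin s) → W} {d : V → (V → Fin s) → W → Fin s} (hs : 1 < s)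
    (hcode : IsIndexCode E Φ d) :
    Fintype.card V - logb s (maxCorrect E s) ≤ protocolEntropy s Φ :=
  have : NeZero s := ⟨by omega⟩
  card_sub_logb_le_protocolEntropy hs maxCorrect_pos fun w =>
    (card_le_card (hcode.filter_subset_correctSet w)).trans
      (card_correctSet_le_maxCorrect (hcode.isStrategy w))

theorem card_sub_logb_maxCorrect_le_indexCodeEntro (hs : 1 < s) :
    Fintype.card V - logb s (maxCorrect E s) ≤ indexCodeEntro E s :=
  le_csInf ⟨_, V → Fin s, inferInstance, inferInstance, id, fun j _ w => w j,
      ⟨fun _ _ _ _ _ => rfl, fun _ _ => rfl⟩, rfl⟩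
    fun _ ⟨_, _, _, _, _, hcode, h⟩ => h ▸ hcode.card_sub_logb_maxCorrect_le_protocolEntropy hs

theorem IsIndexCode.indexCodeEntro_le {W : Type} [Fintype W] [DecidableEq W]
    {Φ : (V → Fin s) → W} {d : V → (V → Fin s) → W → Fin s} (hs : 1 < s)
    (hcode : IsIndexCode E Φ d) : indexCodeEntro E s ≤ protocolEntropy s Φ :=
  csInf_le ⟨_, fun _ ⟨_, _, _, _, _, hcode, h⟩ =>
    h ▸ hcode.card_sub_logb_maxCorrect_le_protocolEntropy hs⟩ ⟨W, _, _, Φ, d, hcode, rfl⟩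

end IndexCodeEntropy

section NetworkEval

variable {V A : Type*} [Fintype V] [DecidableEq V] [AddCommGroup A] {E : V → V → Prop}
  {B : Finset V} {g : V → (V → A) → A}

-- The unique assignment that agrees with `x` on `B` and is guessed correctly off `B`.
variable (B g) in
noncomputable def networkEval (x : V → A) : V → A :=
  invFun (syndrome B g) fun j => if j ∈ B then x j else 0

variable [Fintype A]

theorem syndrome_networkEval (hB : AcyclicOn E (univ \ B)) (hg : IsStrategy E g) (x : V → A) :
    syndrome B g (networkEval B g x) = fun j => if j ∈ B then x j else 0 :=
  invFun_eq ((syndrome_bijective hB hg).2 _)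

theorem networkEval_apply_of_mem (hB : AcyclicOn E (univ \ B)) (hg : IsStrategy E g)
    (x : V → A) {j : V} (hj : j ∈ B) : networkEval B g x j = x j := by
  simpa [syndrome, hj] using congrFun (syndrome_networkEval hB hg x) j

variable [DecidableEq A]

theorem networkEval_mem_correctSet (hB : AcyclicOn E (univ \ B)) (hg : IsStrategy E g)
    (hsol : SolvesSplitNetwork B g) (x : V → A) : networkEval B g x ∈ correctSet g := by
  have hout : networkEval B g x ∈ correctOutside B g :=
    mem_correctOutside_iff_syndrome.2 fun j hj => by simp [syndrome_networkEval hB hg, hj]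
  refine mem_filter.2 ⟨mem_univ _, fun j => ?_⟩
  have hout := (mem_filter.1 hout).2
  by_cases hj : j ∈ B
  exacts [(hsol _ hout j hj).symm, (hout j hj).symm]

theorem isIndexCode_sub_networkEval (hB : AcyclicOn E (univ \ B)) (hg : IsStrategy E g)
    (hsol : SolvesSplitNetwork B g) :
    IsIndexCode E (fun x => x - networkEval B g x) fun j x w => g j (x - w) + w j := by
  refine ⟨fun j x y w hxy => ?_, fun x j => ?_⟩
  · exact congrArg (· + w j) (hg j (x - w) (y - w) fun i hi => by simp [hxy i hi])
  · have hfix := (mem_filter.1 (networkEval_mem_correctSet hB hg hsol x)).2 j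
    simp only [sub_sub_cancel, Pi.sub_apply, hfix, add_sub_cancel]

theorem card_image_sub_networkEval_le (hB : AcyclicOn E (univ \ B)) (hg : IsStrategy E g) :
    (univ.image fun x => x - networkEval B g x).card ≤
      Fintype.card A ^ (Fintype.card V - B.card) := by
  rw [← card_compl, ← Fintype.card_coe Bᶜ, ← Fintype.card_fun, ← card_univ]
  refine card_le_card_of_injOn Bᶜ.restrict (fun _ _ => mem_univ _) ?_
  rintro _ hw _ hw' h
  obtain ⟨x, -, rfl⟩ := mem_image.1 hw
  obtain ⟨y, -, rfl⟩ := mem_image.1 hw'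
  funext j
  by_cases hj : j ∈ B
  · simp [networkEval_apply_of_mem hB hg _ hj]
  · exact congrFun h ⟨j, mem_compl.2 hj⟩

end NetworkEval

section SplitEntropy

variable {V : Type} [Fintype V] [DecidableEq V] {E : V → V → Prop} [DecidableRel E] {s : ℕ}
  {B : Finset V}

theorem indexCodeEntro_le_of_solvesSplitNetwork (hs : 1 < s) (hB : AcyclicOn E (univ \ B))
    {g : V → (V → Fin s) → Fin s} (hg : IsStrategy E g) (hsol : SolvesSplitNetwork B g) :
    indexCodeEntro E s ≤ Fintype.card V - B.card := by
  have : NeZero s := ⟨by omega⟩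
  have hs' : (1 : ℝ) < s := by exact_mod_cast hs
  have hcode := isIndexCode_sub_networkEval hB hg hsol
  have hcard := card_image_sub_networkEval_le hB hg
  rw [Fintype.card_fin] at hcard
  calc indexCodeEntro E s ≤ protocolEntropy s fun x => x - networkEval B g x :=
        hcode.indexCodeEntro_le hs
    _ ≤ protocolLength s fun x => x - networkEval B g x :=
        protocolEntropy_le_protocolLength (by omega) _
    _ ≤ logb s ((s ^ (Fintype.card V - B.card) : ℕ) : ℝ) :=
        logb_le_logb_of_le hs' (by simp) (by exact_mod_cast hcard)
    _ = Fintype.card V - B.card := by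
        rw [Nat.cast_pow, logb_pow, logb_self_eq_one hs', Nat.cast_sub (card_le_univ B), mul_one]

theorem logb_maxCorrect_le_card (hs : 1 < s) (hB : AcyclicOn E (univ \ B)) :
    logb s (maxCorrect E s) ≤ B.card := by
  have : NeZero s := ⟨by omega⟩
  have hs' : (1 : ℝ) < s := by exact_mod_cast hs
  calc logb s (maxCorrect E s) ≤ logb s ((s ^ B.card : ℕ) : ℝ) :=
        logb_le_logb_of_le hs' (by exact_mod_cast maxCorrect_pos)
          (by exact_mod_cast maxCorrect_le_pow hB)
    _ = B.card := by rw [Nat.cast_pow, logb_pow, logb_self_eq_one hs', mul_one]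

theorem logb_maxCorrect_eq_card_iff (hs : 1 < s) (hB : AcyclicOn E (univ \ B)) :
    logb s (maxCorrect E s) = B.card ↔
      ∃ g : V → (V → Fin s) → Fin s, IsStrategy E g ∧ SolvesSplitNetwork B g := by
  have : NeZero s := ⟨by omega⟩
  rw [← maxCorrect_eq_pow_iff hB, logb_eq_iff_rpow_eq (by positivity) (by exact_mod_cast hs.ne')
    (by exact_mod_cast maxCorrect_pos), rpow_natCast, eq_comm]
  exact_mod_cast Iff.rfl

end SplitEntropy

/-- Let `B` be a split of `G` of size `k`. The split network `N_G`
is solvable over `Fin s` iff `G` has private entropy `k` over `Fin s`, and also iff `G`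
has public entropy `k` over `Fin s` (`E^public(G,s) = n − i_entro(G,s)`). -/
theorem split_network_solvable_iff_entropy {V : Type} [Fintype V] [DecidableEq V]
    (E : V → V → Prop) [DecidableRel E] (B : Finset V)
    (hB : AcyclicOn E (Finset.univ \ B)) (s : ℕ) (hs : 2 ≤ s) :
    ((∃ g : V → (V → Fin s) → Fin s, IsStrategy E g ∧
        ∀ x : V → Fin s, (∀ j, j ∉ B → x j = g j x) → ∀ b ∈ B, x b = g b x)
      ↔ graphEntropy E s = (B.card : ℝ))
    ∧ ((∃ g : V → (V → Fin s) → Fin s, IsStrategy E g ∧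
        ∀ x : V → Fin s, (∀ j, j ∉ B → x j = g j x) → ∀ b ∈ B, x b = g b x)
      ↔ (Fintype.card V : ℝ) - indexCodeEntro E s = (B.card : ℝ)) := by
  have hsolvable := (logb_maxCorrect_eq_card_iff hs hB).symm
  have hle := logb_maxCorrect_le_card hs hB
  have hpublic := card_sub_logb_maxCorrect_le_indexCodeEntro (E := E) hs
  refine ⟨graphEntropy_eq_logb_maxCorrect (E := E) hs ▸ hsolvable, fun h => ?_, fun h => ?_⟩
  · obtain ⟨g, hg, hsol⟩ := h
    have hupper := indexCodeEntro_le_of_solvesSplitNetwork hs hB hg hsol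
    linarith [hsolvable.1 ⟨g, hg, hsol⟩]
  · exact hsolvable.2 (by linarith)
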